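/- Let R = (r_{n,k})_{n,k=0}^N be lower triangular with unit diagonal, and for S = {s_1 < ... < s_m} ⊆ [n-1] set α_{[0,n]}(S) = Π_{i=1}^{m+1} r_{s_i, s_{i-1}} with s_0 = 0, s_{m+1} = n, and β_{[0,n]}(S) = Σ_{T⊆S} (-1)^{|S\T|} α_{[0,n]}(T). Then the γ-polynomial of the Chow polynomial H_n[R] equals Σ_{S⊆[n-1], S∪{0} stable} β_{[0,n]}(S) t^{|S|}. -/

import Mathlib

open Polynomial

/-- `d`, `H` are the Chow-derangement and Chow polynomials of the lower triangular
matrix `r` with unit diagonal (up to index `N`). -/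
def ChowFamily (N : ℕ) (r : ℕ → ℕ → ℝ) (d H : ℕ → ℝ[X]) : Prop :=
  d 0 = 1 ∧
  (∀ n ≤ N, (d n).natDegree ≤ n) ∧
  (∀ n ≤ N, reflect n (d n) = d n) ∧
  (∀ n ≤ N, H n = ∑ k ∈ Finset.range (n + 1), C (r n k) * d k) ∧
  (∀ n, 1 ≤ n → n ≤ N → reflect n (H n) = X * H n)

/-- For `S = {s₁ < … < s_m} ⊆ [n-1]`, `α_{[0,n]}(S) = Π_{i=1}^{m+1} r_{sᵢ, sᵢ₋₁}`
with `s₀ = 0` and `s_{m+1} = n`. -/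
def alphaFn (r : ℕ → ℕ → ℝ) (n : ℕ) (S : Finset ℕ) : ℝ :=
  (List.zipWith (fun a b => r b a) (0 :: (S.sort (· ≤ ·) ++ [n]))
    (S.sort (· ≤ ·) ++ [n])).prod

/-- `β_{[0,n]}(S) = Σ_{T ⊆ S} (-1)^{|S∖T|} α_{[0,n]}(T)`. -/
def betaFn (r : ℕ → ℕ → ℝ) (n : ℕ) (S : Finset ℕ) : ℝ :=
  ∑ T ∈ S.powerset, (-1 : ℝ) ^ (S.card - T.card) * alphaFn r n T


open Finset

/-!
Write `E_{n,m} = Σ β_{[0,n]}(S) t^{|S|} (1+t)^{m-2|S|}` over the stable `S ⊆ [2,m]`, so that the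
claim reads `H_n = E_{n,n-1}`. Splitting off the element `m` and using
`β_{[0,n]}(S ∪ {m}) = r_{n,m} β_{[0,m]}(S) - β_{[0,n]}(S)` gives the recursion
`E_{n,m} = (1+t) E_{n,m-1} + r_{n,m} t E_{m,m-2} - t E_{n,m-2}`, which integrates to
`E_{n,m} = Σ_k r_{n,k} D_k [m+1-k]_t` with `D_0 = 1`, `D_1 = 0`, `D_k = t E_{k,k-2}` and
`[j]_t = 1 + t + ⋯ + t^{j-1}`. Each `D_k` is palindromic of degree `k`, so for `k < n` the
defects `D_k - t^{n-k} D_k` and `t D_k - t^{n-k} D_k` are `(1-t) [n-k]_t D_k` and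
`(1-t) t [n-1-k]_t D_k`. Hence the `D_k` solve the palindromicity equations, which determine
the `d_k` after cancelling `1 - t`; so `d = D`, and the equation for `H_n` becomes
`(1-t) H_n = (1-t) E_{n,n-1}`.
-/

lemma sort_insert_of_forall_lt {S : Finset ℕ} {s : ℕ} (h : ∀ x ∈ S, x < s) :
    (insert s S).sort = S.sort ++ [s] := by
  refine (sortedLT_sort _).eq_of_mem_iff ?_ fun a => by simp [or_comm]
  rw [List.sortedLT_iff_pairwise, List.pairwise_append]
  exact ⟨(sortedLT_sort S).pairwise, by simp, by simpa using h⟩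

lemma alphaFn_insert_of_forall_lt (r : ℕ → ℕ → ℝ) (n : ℕ) {S : Finset ℕ} {s : ℕ}
    (h : ∀ x ∈ S, x < s) :
    alphaFn r n (insert s S) = alphaFn r s S * r n s := by
  simp only [alphaFn, sort_insert_of_forall_lt h]
  generalize S.sort = L
  have hlen : (0 :: L).length = (L ++ [s]).length := by simp
  have split_at_s : ∀ l : List ℕ,
      List.zipWith (fun a b => r b a) (0 :: (L ++ [s] ++ l)) (L ++ [s] ++ l)
        = List.zipWith (fun a b => r b a) (0 :: L) (L ++ [s])
          ++ List.zipWith (fun a b => r b a) (s :: l) l := fun l => by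
    rw [← List.zipWith_append hlen]
    simp
  rw [split_at_s [n], ← List.append_nil (L ++ [s]), split_at_s []]
  simp

lemma betaFn_empty (r : ℕ → ℕ → ℝ) (n : ℕ) : betaFn r n ∅ = r n 0 := by
  simp [betaFn, alphaFn]

lemma betaFn_insert_of_forall_lt (r : ℕ → ℕ → ℝ) (n : ℕ) {S : Finset ℕ} {s : ℕ}
    (h : ∀ x ∈ S, x < s) :
    betaFn r n (insert s S) = r n s * betaFn r s S - betaFn r n S := by
  have hs : s ∉ S := fun hs => (h s hs).false
  rw [betaFn, sum_powerset_insert hs, card_insert_of_notMem hs, betaFn, betaFn, mul_sum,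
    add_comm, sub_eq_add_neg, ← sum_neg_distrib]
  congr 1 <;> refine sum_congr rfl fun T hT => ?_
  · have hTS := mem_powerset.mp hT
    rw [card_insert_of_notMem (fun hsT => hs (hTS hsT)),
      alphaFn_insert_of_forall_lt r n fun x hx => h x (hTS hx), Nat.add_sub_add_right]
    ring
  · rw [Nat.succ_sub (card_le_card (mem_powerset.mp hT)), pow_succ]
    ring

def stableSets (m : ℕ) : Finset (Finset ℕ) :=
  (Icc 1 m).powerset.filter (fun S => ∀ i ∈ insert 0 S, i + 1 ∉ insert 0 S)

lemma mem_stableSets {m : ℕ} {S : Finset ℕ} :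
    S ∈ stableSets m ↔ ∀ i ∈ S, 2 ≤ i ∧ i ≤ m ∧ i + 1 ∉ S := by
  simp only [stableSets, mem_filter, mem_powerset, subset_iff, mem_Icc, mem_insert,
    forall_eq_or_imp]
  grind

lemma two_mul_card_le_of_mem_stableSets {m : ℕ} {S : Finset ℕ} (hS : S ∈ stableSets m) :
    2 * S.card ≤ m := by
  have hS := mem_stableSets.mp hS
  have hdisj : Disjoint S (S.map (addRightEmbedding 1)) := by
    simp only [disjoint_left, mem_map, addRightEmbedding_apply, not_exists, not_and]
    exact fun i hi j hj hji => (hS j hj).2.2 (hji ▸ hi)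
  have hsub : S ∪ S.map (addRightEmbedding 1) ⊆ Icc 2 (m + 1) := by
    intro i
    simp only [mem_union, mem_map, addRightEmbedding_apply, mem_Icc]
    rintro (hi | ⟨j, hj, rfl⟩) <;> grind
  simpa [card_union_of_disjoint hdisj, two_mul] using card_le_card hsub

lemma sum_stableSets_add_two {M : Type*} [AddCommMonoid M] (f : Finset ℕ → M) (w : ℕ) :
    ∑ S ∈ stableSets (w + 2), f S
      = ∑ S ∈ stableSets (w + 1), f S + ∑ S ∈ stableSets w, f (insert (w + 2) S) := by
  rw [← sum_filter_add_sum_filter_not _ (fun S => w + 2 ∉ S)]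
  congr 1
  · congr 1
    ext S
    simp only [mem_filter, mem_stableSets]
    grind
  · refine sum_nbij' (fun S => S.erase (w + 2)) (insert (w + 2)) ?_ ?_ ?_ ?_ ?_
    · simp only [mem_filter, mem_stableSets]
      grind
    · simp only [mem_filter, mem_stableSets]
      grind
    · simp only [mem_filter, not_not]
      exact fun S hS => insert_erase hS.2
    · intro S hS
      simp only [mem_stableSets] at hS
      exact erase_insert fun h => by have := hS _ h; omega
    · simp only [mem_filter, not_not]
      exact fun S hS => by rw [insert_erase hS.2]

noncomputable def gammaSum (r : ℕ → ℕ → ℝ) (n m : ℕ) : ℝ[X] :=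
  ∑ S ∈ stableSets m, C (betaFn r n S) * (X ^ S.card * (1 + X) ^ (m - 2 * S.card))

lemma gammaSum_zero (r : ℕ → ℕ → ℝ) (n : ℕ) : gammaSum r n 0 = C (r n 0) := by
  simp [gammaSum, show stableSets 0 = {∅} by rfl, betaFn_empty]

lemma gammaSum_one (r : ℕ → ℕ → ℝ) (n : ℕ) : gammaSum r n 1 = C (r n 0) * (1 + X) := by
  simp [gammaSum, show stableSets 1 = {∅} by rfl, betaFn_empty]

lemma gammaSum_add_two (r : ℕ → ℕ → ℝ) (n w : ℕ) :
    gammaSum r n (w + 2) = (1 + X) * gammaSum r n (w + 1)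
      + C (r n (w + 2)) * (X * gammaSum r (w + 2) w) - X * gammaSum r n w := by
  rw [gammaSum, sum_stableSets_add_two, gammaSum, gammaSum, gammaSum, mul_sum, mul_sum, mul_sum,
    mul_sum, add_sub_assoc, ← sum_sub_distrib]
  congr 1 <;> refine sum_congr rfl fun S hS => ?_
  · have := two_mul_card_le_of_mem_stableSets hS
    rw [show w + 2 - 2 * S.card = w + 1 - 2 * S.card + 1 by omega, pow_succ]
    ring
  · have := two_mul_card_le_of_mem_stableSets hS
    have hlt : ∀ i ∈ S, i < w + 2 := fun i hi => by
      have := mem_stableSets.mp hS i hi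
      omega
    rw [card_insert_of_notMem fun h => (hlt _ h).false, betaFn_insert_of_forall_lt r n hlt,
      show w + 2 - 2 * (S.card + 1) = w - 2 * S.card by omega, C_sub, C_mul]
    ring

noncomputable def qInt (j : ℕ) : ℝ[X] := ∑ i ∈ range j, X ^ i

lemma qInt_zero : qInt 0 = 0 := sum_range_zero _

lemma qInt_one : qInt 1 = 1 := by simp [qInt]

lemma qInt_add_two (j : ℕ) : qInt (j + 2) = (1 + X) * qInt (j + 1) - X * qInt j := by
  simp only [qInt, sum_range_succ]
  ring

lemma one_sub_X_mul_qInt (j : ℕ) : (1 - X) * qInt j = 1 - X ^ j := mul_neg_geom_sum X j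

noncomputable def chowDerangement (r : ℕ → ℕ → ℝ) : ℕ → ℝ[X]
  | 0 => 1
  | 1 => 0
  | k + 2 => X * gammaSum r (k + 2) k

lemma gammaSum_eq_sum_qInt (r : ℕ → ℕ → ℝ) (n : ℕ) : ∀ m : ℕ,
    gammaSum r n m = ∑ k ∈ range (m + 2), C (r n k) * chowDerangement r k * qInt (m + 1 - k)
  | 0 => by simp [sum_range_succ, gammaSum_zero, chowDerangement, qInt_one]
  | 1 => by simp [sum_range_succ, gammaSum_one, chowDerangement, qInt]
  | w + 2 => by
    have h_interior : ∑ k ∈ range (w + 2), C (r n k) * chowDerangement r k * qInt (w + 2 + 1 - k)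
        = (1 + X) * ∑ k ∈ range (w + 2), C (r n k) * chowDerangement r k * qInt (w + 1 + 1 - k)
          - X * ∑ k ∈ range (w + 2), C (r n k) * chowDerangement r k * qInt (w + 1 - k) := by
      rw [mul_sum, mul_sum, ← sum_sub_distrib]
      refine sum_congr rfl fun k hk => ?_
      rw [show w + 2 + 1 - k = w + 1 - k + 2 by grind, show w + 1 + 1 - k = w + 1 - k + 1 by grind,
        qInt_add_two]
      ring
    rw [gammaSum_add_two, gammaSum_eq_sum_qInt r n (w + 1), gammaSum_eq_sum_qInt r n w]
    conv_lhs => rw [sum_range_succ]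
    conv_rhs => rw [sum_range_succ, sum_range_succ, h_interior]
    rw [show w + 2 + 1 - (w + 2) = 1 by omega, Nat.sub_self, Nat.sub_self, qInt_zero, qInt_one,
      chowDerangement]
    ring

section Reflect

variable {R : Type*} [CommSemiring R]

lemma reflect_sum {ι : Type*} (s : Finset ι) (f : ι → R[X]) (N : ℕ) :
    reflect N (∑ i ∈ s, f i) = ∑ i ∈ s, reflect N (f i) :=
  map_sum (⟨⟨reflect N, reflect_zero⟩, fun p q => reflect_add p q N⟩ : R[X] →+ R[X]) f s

lemma natDegree_one_add_X_pow_le (b : ℕ) : ((1 + X : R[X]) ^ b).natDegree ≤ b := by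
  have h : (1 + X : R[X]).natDegree ≤ 1 := natDegree_add_le_of_degree_le (by simp) natDegree_X_le
  simpa using natDegree_pow_le_of_le b h

lemma reflect_one_add_X_pow (b : ℕ) : reflect b ((1 + X : R[X]) ^ b) = (1 + X) ^ b := by
  induction b with
  | zero => simp
  | succ b ih =>
    have h1 : reflect 1 (1 + X : R[X]) = 1 + X := by simp [add_comm]
    rw [pow_succ, reflect_mul _ _ (natDegree_one_add_X_pow_le b)
      (by simpa using natDegree_one_add_X_pow_le 1), ih, h1]

lemma reflect_X_pow_mul_one_add_X_pow (a b c : ℕ) :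
    reflect (a + b + c) ((X : R[X]) ^ a * (1 + X) ^ b) = X ^ c * (1 + X) ^ b := by
  rw [← mul_one ((X : R[X]) ^ a * (1 + X) ^ b),
    reflect_mul _ _ (natDegree_mul_le_of_le (natDegree_X_pow_le a) (natDegree_one_add_X_pow_le b))
      (by simp),
    reflect_mul _ _ (natDegree_X_pow_le a) (natDegree_one_add_X_pow_le b), reflect_monomial,
    revAt_le le_rfl, Nat.sub_self, reflect_one_add_X_pow, reflect_one]
  ring

end Reflect

lemma reflect_chowDerangement (r : ℕ → ℕ → ℝ) {n k : ℕ} (hk : k ≤ n) :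
    reflect n (chowDerangement r k) = X ^ (n - k) * chowDerangement r k := by
  match k, hk with
  | 0, _ => simp [chowDerangement, reflect_one]
  | 1, _ => simp [chowDerangement]
  | k + 2, hk =>
    rw [chowDerangement, gammaSum, mul_sum, mul_sum, reflect_sum]
    refine sum_congr rfl fun S hS => ?_
    have := two_mul_card_le_of_mem_stableSets hS
    have hsplit : n = (S.card + 1) + (k - 2 * S.card) + (n - (k + 2) + S.card + 1) := by omega
    rw [mul_left_comm, reflect_C_mul, ← mul_assoc, ← pow_succ', hsplit,
      reflect_X_pow_mul_one_add_X_pow, ← hsplit]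
    ring

lemma one_sub_X_ne_zero : (1 - X : ℝ[X]) ≠ 0 := fun h => by
  simpa using congrArg (eval 0) h

lemma sub_reflect_sum_chowDerangement (r : ℕ → ℕ → ℝ) {n : ℕ} (hn : 1 ≤ n) :
    (∑ k ∈ range n, C (r n k) * chowDerangement r k)
        - reflect n (∑ k ∈ range n, C (r n k) * chowDerangement r k)
      = (1 - X) * gammaSum r n (n - 1) := by
  rw [gammaSum_eq_sum_qInt, Nat.sub_add_cancel hn, show n - 1 + 2 = n + 1 by omega,
    sum_range_succ, Nat.sub_self, qInt_zero, mul_zero, add_zero, mul_sum, reflect_sum,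
    ← sum_sub_distrib]
  refine sum_congr rfl fun k hk => ?_
  rw [reflect_C_mul, reflect_chowDerangement r (mem_range.mp hk).le]
  linear_combination -(C (r n k) * chowDerangement r k) * one_sub_X_mul_qInt (n - k)

lemma X_mul_sum_qInt_chowDerangement (r : ℕ → ℕ → ℝ) {n : ℕ} (hn : 1 ≤ n) :
    X * ∑ k ∈ range n, C (r n k) * chowDerangement r k * qInt (n - 1 - k)
      = chowDerangement r n := by
  match n, hn with
  | 1, _ => simp [chowDerangement, qInt]
  | m + 2, _ => rw [chowDerangement, gammaSum_eq_sum_qInt]; rfl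

lemma X_mul_sub_reflect_sum_chowDerangement (r : ℕ → ℕ → ℝ) {n : ℕ} (hn : 1 ≤ n) :
    X * (∑ k ∈ range n, C (r n k) * chowDerangement r k)
        - reflect n (∑ k ∈ range n, C (r n k) * chowDerangement r k)
      = (1 - X) * chowDerangement r n := by
  rw [← X_mul_sum_qInt_chowDerangement r hn, mul_sum, mul_sum, mul_sum, reflect_sum,
    ← sum_sub_distrib]
  refine sum_congr rfl fun k hk => ?_
  have hk := mem_range.mp hk
  rw [reflect_C_mul, reflect_chowDerangement r hk.le, show n - k = n - 1 - k + 1 by omega,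
    pow_succ]
  linear_combination -(X * C (r n k) * chowDerangement r k) * one_sub_X_mul_qInt (n - 1 - k)

namespace ChowFamily

variable {N : ℕ} {r : ℕ → ℕ → ℝ} {d H : ℕ → ℝ[X]}

lemma H_eq_sum_add (hdH : ChowFamily N r d H) (hdiag : ∀ n ≤ N, r n n = 1) {n : ℕ}
    (hn : n ≤ N) : H n = (∑ k ∈ range n, C (r n k) * d k) + d n := by
  obtain ⟨-, -, -, hH, -⟩ := hdH
  rw [hH n hn, sum_range_succ, hdiag n hn, C_1, one_mul]

lemma reflect_sum_add_d (hdH : ChowFamily N r d H) (hdiag : ∀ n ≤ N, r n n = 1) {n : ℕ}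
    (h1 : 1 ≤ n) (hn : n ≤ N) :
    reflect n (∑ k ∈ range n, C (r n k) * d k) + d n
      = X * ((∑ k ∈ range n, C (r n k) * d k) + d n) := by
  have hHn := hdH.H_eq_sum_add hdiag hn
  obtain ⟨-, -, hd, -, hH⟩ := hdH
  simpa only [hHn, reflect_add, hd n hn] using hH n h1 hn

lemma one_sub_X_mul_d (hdH : ChowFamily N r d H) (hdiag : ∀ n ≤ N, r n n = 1) {n : ℕ}
    (h1 : 1 ≤ n) (hn : n ≤ N) :
    (1 - X) * d n = X * (∑ k ∈ range n, C (r n k) * d k)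
      - reflect n (∑ k ∈ range n, C (r n k) * d k) := by
  linear_combination hdH.reflect_sum_add_d hdiag h1 hn

lemma one_sub_X_mul_H (hdH : ChowFamily N r d H) (hdiag : ∀ n ≤ N, r n n = 1) {n : ℕ}
    (h1 : 1 ≤ n) (hn : n ≤ N) :
    (1 - X) * H n = (∑ k ∈ range n, C (r n k) * d k)
      - reflect n (∑ k ∈ range n, C (r n k) * d k) := by
  rw [hdH.H_eq_sum_add hdiag hn]
  linear_combination hdH.reflect_sum_add_d hdiag h1 hn

lemma d_eq_chowDerangement (hdH : ChowFamily N r d H) (hdiag : ∀ n ≤ N, r n n = 1) :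
    ∀ n ≤ N, d n = chowDerangement r n := by
  intro n
  induction n using Nat.strong_induction_on with
  | _ n ih =>
    intro hn
    obtain rfl | h1 := Nat.eq_zero_or_pos n
    · exact hdH.1
    have hsum : ∑ k ∈ range n, C (r n k) * d k = ∑ k ∈ range n, C (r n k) * chowDerangement r k :=
      sum_congr rfl fun k hk => by rw [ih k (mem_range.mp hk) (by grind)]
    refine mul_left_cancel₀ one_sub_X_ne_zero ?_
    rw [hdH.one_sub_X_mul_d hdiag h1 hn, hsum, X_mul_sub_reflect_sum_chowDerangement r h1]

end ChowFamily

theorem stmt12_general (N : ℕ) (r : ℕ → ℕ → ℝ)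
    (hdiag : ∀ n ≤ N, r n n = 1)
    (d H : ℕ → ℝ[X]) (hdH : ChowFamily N r d H) :
    ∀ n ≤ N, H n =
      ∑ S ∈ (Finset.Icc 1 (n - 1)).powerset.filter
          (fun S => ∀ i ∈ insert 0 S, i + 1 ∉ insert 0 S),
        C (betaFn r n S) * (X ^ S.card * (1 + X) ^ (n - 1 - 2 * S.card)) := by
  intro n hn
  change H n = gammaSum r n (n - 1)
  obtain rfl | h1 := Nat.eq_zero_or_pos n
  · rw [hdH.H_eq_sum_add hdiag hn, sum_range_zero, zero_add, hdH.1, gammaSum_zero, hdiag 0 hn,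
      C_1]
  have hsum : ∑ k ∈ range n, C (r n k) * d k = ∑ k ∈ range n, C (r n k) * chowDerangement r k :=
    sum_congr rfl fun k hk => by rw [hdH.d_eq_chowDerangement hdiag k (by grind)]
  refine mul_left_cancel₀ one_sub_X_ne_zero ?_
  rw [hdH.one_sub_X_mul_H hdiag h1 hn, hsum, sub_reflect_sum_chowDerangement r h1]

/-- The γ-polynomial of `Hₙ` (in the basis `tᵏ(1+t)^{n-1-2k}`, as `Hₙ` is
palindromic with center `(n-1)/2`) equals
`Σ_{S ⊆ [n-1], S ∪ {0} stable} β_{[0,n]}(S) t^{|S|}`. -/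
theorem stmt12 (N : ℕ) (r : ℕ → ℕ → ℝ)
    (htri : ∀ n k, n < k → r n k = 0) (hdiag : ∀ n ≤ N, r n n = 1)
    (d H : ℕ → ℝ[X]) (hdH : ChowFamily N r d H) :
    ∀ n ≤ N, H n =
      ∑ S ∈ (Finset.Icc 1 (n - 1)).powerset.filter
          (fun S => ∀ i ∈ insert 0 S, i + 1 ∉ insert 0 S),
        C (betaFn r n S) * (X ^ S.card * (1 + X) ^ (n - 1 - 2 * S.card)) :=
  stmt12_general N r hdiag d H hdH
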